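/- Let (d,σ) be a universal-deadline instance with σ taking nonnegative rational values, let k be the largest index with 0 ≤ k < d−1 and σ(k) > σ(k+1), and let m with k < m < d satisfy σ(m) < (Σ_{i=k}^{m} σ(i))/(m−k+1) and, if m < d−1, σ(m+1) ≥ (Σ_{i=k}^{m+1} σ(i))/(m−k+2). Define σ' by σ'(i) = σ(i) for i < k or i > m, and σ'(i) = (Σ_{j=k}^{m} σ(j))/(m−k+1) for k ≤ i ≤ m. Then for every t with 0 ≤ t < d, ϱ̂_{σ'}(t) ≤ ϱ̂_σ(t); that is, replacing the block σ(k),…,σ(m) by its average never increases the maximum online density at any time. -/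

import Mathlib

/-- The maximum online density at time `t` of the universal-deadline instance `(d, σ)`:
`ϱ̂_σ(t) = max_{0≤ℓ≤t} (Σ_{i=ℓ}^{t} σ(i)) / (d − ℓ)`. -/
def maxOnlineDensity (d : ℕ) (σ : ℕ → ℚ) (t : ℕ) : ℚ :=
  (Finset.range (t + 1)).sup' ⟨0, Finset.mem_range.mpr (Nat.succ_pos t)⟩
    (fun ℓ => (∑ i ∈ Finset.Icc ℓ t, σ i) / ((d : ℚ) - (ℓ : ℚ)))

private lemma sum_Icc_split (f : ℕ → ℚ) (a b c : ℕ) (h1 : a ≤ b + 1) (h2 : b ≤ c) :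
    ∑ i ∈ Finset.Icc a c, f i
      = ∑ i ∈ Finset.Icc a b, f i + ∑ i ∈ Finset.Icc (b + 1) c, f i := by
  rw [← Finset.Ico_add_one_right_eq_Icc a c, ← Finset.Ico_add_one_right_eq_Icc a b, ← Finset.Ico_add_one_right_eq_Icc (b + 1) c,
    Finset.sum_Ico_consecutive f h1 (by omega)]

private lemma card_Icc_cast (a b : ℕ) (h : a ≤ b + 1) :
    ((Finset.Icc a b).card : ℚ) = (b : ℚ) + 1 - a := by
  rw [Nat.card_Icc]
  have := Nat.cast_sub (R := ℚ) h
  push_cast at this ⊢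
  linarith

/-- With `k` the largest index below `d−1` where `σ(k) > σ(k+1)` and
`m` as in the averaging reduction, replacing the block `σ(k),…,σ(m)` by its average
never increases the maximum online density at any time: `ϱ̂_{σ'}(t) ≤ ϱ̂_σ(t)` for all
`t < d`. -/
theorem averaging_never_increases_density (d : ℕ) (σ : ℕ → ℚ) (hσ : ∀ i, 0 ≤ σ i)
    (k m : ℕ) (hk : k < d - 1) (hdec : σ (k + 1) < σ k)
    (hklargest : ∀ i, k < i → i < d - 1 → σ i ≤ σ (i + 1))
    (hkm : k < m) (hmd : m < d)
    (hm : σ m < (∑ i ∈ Finset.Icc k m, σ i) / ((m : ℚ) - (k : ℚ) + 1))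
    (hm' : m < d - 1 →
      (∑ i ∈ Finset.Icc k (m + 1), σ i) / ((m : ℚ) - (k : ℚ) + 2) ≤ σ (m + 1)) :
    ∀ t : ℕ, t < d →
      maxOnlineDensity d (fun i => if k ≤ i ∧ i ≤ m then
          (∑ j ∈ Finset.Icc k m, σ j) / ((m : ℚ) - (k : ℚ) + 1) else σ i) t ≤
        maxOnlineDensity d σ t := by
  intro t htd
  set A : ℚ := (∑ j ∈ Finset.Icc k m, σ j) / ((m : ℚ) - (k : ℚ) + 1) with hAdef
  set σ' : ℕ → ℚ := fun i => if k ≤ i ∧ i ≤ m then A else σ i with hσ'def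
  have hkmQ : (k : ℚ) < m := by exact_mod_cast hkm
  have hden : (0 : ℚ) < (m : ℚ) - k + 1 := by linarith
  have hA0 : 0 ≤ A := div_nonneg (Finset.sum_nonneg fun i _ => hσ i) hden.le
  have hblock : ∑ j ∈ Finset.Icc k m, σ j = ((m : ℚ) - k + 1) * A := by
    rw [hAdef, mul_comm, div_mul_cancel₀ _ (ne_of_gt hden)]
  -- monotonicity of σ above k up to m
  have mono : ∀ i j, k < i → i ≤ j → j ≤ m → σ i ≤ σ j := by
    intro i j hki
    induction j with
    | zero => intro h1 _; exact absurd h1 (by omega)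
    | succ n ih =>
      intro hij hjm
      rcases Nat.lt_or_ge n i with h | h
      · have : i = n + 1 := by omega
        rw [this]
      · have h1 : σ i ≤ σ n := ih h (by omega)
        have h2 : σ n ≤ σ (n + 1) := hklargest n (by omega) (by omega)
        linarith
  have hltA : ∀ i, k < i → i ≤ m → σ i < A := fun i h1 h2 =>
    lt_of_le_of_lt (mono i m h1 h2 le_rfl) hm
  -- prefix sums dominate the averaged prefix
  have prefixL : ∀ s, k ≤ s → s ≤ m →
      ((s : ℚ) + 1 - k) * A ≤ ∑ i ∈ Finset.Icc k s, σ i := by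
    intro s h1 h2
    have hsplit := sum_Icc_split σ k s m (by omega) h2
    have hsuf : ∑ i ∈ Finset.Icc (s + 1) m, σ i ≤ ((m : ℚ) - s) * A := by
      have hle : ∑ i ∈ Finset.Icc (s + 1) m, σ i ≤ ∑ _i ∈ Finset.Icc (s + 1) m, A :=
        Finset.sum_le_sum fun i hi => by
          have hmem := Finset.mem_Icc.mp hi
          exact (hltA i (by omega) hmem.2).le
      have hcard : ∑ _i ∈ Finset.Icc (s + 1) m, A = ((m : ℚ) - s) * A := by
        rw [Finset.sum_const, nsmul_eq_mul, card_Icc_cast (s + 1) m (by omega)]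
        push_cast
        ring
      linarith
    have hsQ : (0:ℚ) ≤ (s : ℚ) := by positivity
    linarith [hblock, hsplit, hsuf]
  -- sum of σ' over a block-contained interval
  have sum_block : ∀ a b : ℕ, k ≤ a → b ≤ m → a ≤ b + 1 →
      ∑ i ∈ Finset.Icc a b, σ' i = ((b : ℚ) + 1 - a) * A := by
    intro a b ha hb hab
    have : ∑ i ∈ Finset.Icc a b, σ' i = ∑ _i ∈ Finset.Icc a b, A :=
      Finset.sum_congr rfl fun i hi => by
        have hmem := Finset.mem_Icc.mp hi
        simp only [hσ'def]
        rw [if_pos ⟨le_trans ha hmem.1, le_trans hmem.2 hb⟩]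
    rw [this, Finset.sum_const, nsmul_eq_mul, card_Icc_cast a b hab]
  -- sum of σ' over an interval disjoint from the block
  have sum_out : ∀ a b : ℕ, (b < k ∨ m < a) →
      ∑ i ∈ Finset.Icc a b, σ' i = ∑ i ∈ Finset.Icc a b, σ i := by
    intro a b hab
    refine Finset.sum_congr rfl fun i hi => ?_
    have hmem := Finset.mem_Icc.mp hi
    simp only [hσ'def]
    rw [if_neg (by omega)]
  -- reduce goal to each starting index ℓ
  unfold maxOnlineDensity
  refine Finset.sup'_le _ _ ?_
  have hup : ∀ l, l ≤ t →
      (∑ i ∈ Finset.Icc l t, σ i) / ((d : ℚ) - l) ≤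
        (Finset.range (t + 1)).sup' Finset.nonempty_range_add_one
          (fun ℓ => (∑ i ∈ Finset.Icc ℓ t, σ i) / ((d : ℚ) - (ℓ : ℚ))) := by
    intro l hl
    exact Finset.le_sup' (fun ℓ => (∑ i ∈ Finset.Icc ℓ t, σ i) / ((d : ℚ) - (ℓ : ℚ)))
      (Finset.mem_range.mpr (by omega))
  intro ℓ hℓmem
  have hℓt : ℓ ≤ t := by
    have := Finset.mem_range.mp hℓmem
    omega
  have htdQ : (t : ℚ) < d := by exact_mod_cast htd
  have hℓtQ : (ℓ : ℚ) ≤ t := by exact_mod_cast hℓt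
  have hdl : (0 : ℚ) < (d : ℚ) - ℓ := by linarith
  have ht1dQ : (t : ℚ) + 1 ≤ d := by
    have h' : t + 1 ≤ d := htd
    exact_mod_cast h'
  by_cases h1 : t < k
  · rw [sum_out ℓ t (Or.inl h1)]
    exact hup ℓ hℓt
  by_cases h2 : m < ℓ
  · rw [sum_out ℓ t (Or.inr h2)]
    exact hup ℓ hℓt
  push_neg at h1 h2  -- k ≤ t, ℓ ≤ m
  by_cases h3 : ℓ ≤ k
  · -- start before the block: sums only decrease
    have hsub : Finset.Icc k t ⊆ Finset.Icc ℓ t := Finset.Icc_subset_Icc h3 le_rfl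
    have hdiff : ∑ i ∈ Finset.Icc k t, (σ' i - σ i) = ∑ i ∈ Finset.Icc ℓ t, (σ' i - σ i) := by
      apply Finset.sum_subset hsub
      intro i hiℓ hik
      have hmem := Finset.mem_Icc.mp hiℓ
      have hik' : ¬ k ≤ i := fun hk' => hik (Finset.mem_Icc.mpr ⟨hk', hmem.2⟩)
      simp only [hσ'def]
      rw [if_neg (by omega)]
      ring
    have hkt : ∑ i ∈ Finset.Icc k t, σ' i ≤ ∑ i ∈ Finset.Icc k t, σ i := by
      by_cases h4 : t ≤ m
      · rw [sum_block k t le_rfl h4 (by omega)]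
        exact prefixL t h1 h4
      · push_neg at h4
        rw [sum_Icc_split σ' k m t (by omega) (by omega),
          sum_Icc_split σ k m t (by omega) (by omega),
          sum_block k m le_rfl le_rfl (by omega), sum_out (m + 1) t (Or.inr (by omega)),
          hblock]
        have : ((m : ℚ) + 1 - k) * A = ((m : ℚ) - k + 1) * A := by ring
        linarith
    have hle : ∑ i ∈ Finset.Icc ℓ t, σ' i ≤ ∑ i ∈ Finset.Icc ℓ t, σ i := by
      rw [Finset.sum_sub_distrib, Finset.sum_sub_distrib] at hdiff
      linarith
    exact le_trans ((div_le_div_iff_of_pos_right hdl).mpr hle) (hup ℓ hℓt)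
  · push_neg at h3  -- k < ℓ
    have hkℓQ : (k : ℚ) < ℓ := by exact_mod_cast h3
    have hktQ : (k : ℚ) ≤ t := by exact_mod_cast h1
    have hdk : (0 : ℚ) < (d : ℚ) - k := by linarith
    have hℓmQ : (ℓ : ℚ) ≤ m := by exact_mod_cast h2
    by_cases h4 : t ≤ m
    · -- interval inside block
      rw [sum_block ℓ t (by omega) h4 (by omega)]
      have htmQ : (t : ℚ) ≤ m := by exact_mod_cast h4
      have step1 : ((t : ℚ) + 1 - ℓ) * A / ((d : ℚ) - ℓ)
          ≤ ((t : ℚ) + 1 - k) * A / ((d : ℚ) - k) := by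
        rw [div_le_div_iff₀ hdl hdk]
        nlinarith [mul_nonneg (mul_nonneg (sub_nonneg.mpr hkℓQ.le) hA0)
          (sub_nonneg.mpr ht1dQ)]
      have step2 : ((t : ℚ) + 1 - k) * A / ((d : ℚ) - k)
          ≤ (∑ i ∈ Finset.Icc k t, σ i) / ((d : ℚ) - k) :=
        (div_le_div_iff_of_pos_right hdk).mpr (prefixL t h1 h4)
      exact le_trans (le_trans step1 step2) (hup k h1)
    · push_neg at h4  -- m < t
      have hmtQ : (m : ℚ) < t := by exact_mod_cast h4
      have hdm : (0 : ℚ) < (d : ℚ) - m - 1 := by linarith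
      set S : ℚ := ∑ i ∈ Finset.Icc (m + 1) t, σ i with hSdef
      have e : ∑ i ∈ Finset.Icc ℓ t, σ' i = ((m : ℚ) + 1 - ℓ) * A + S := by
        rw [sum_Icc_split σ' ℓ m t (by omega) (by omega),
          sum_block ℓ m (by omega) le_rfl (by omega), sum_out (m + 1) t (Or.inr (by omega))]
      have eσ : ∑ i ∈ Finset.Icc k t, σ i = ((m : ℚ) + 1 - k) * A + S := by
        rw [sum_Icc_split σ k m t (by omega) (by omega), hblock]
        ring
      have hM1 := hup k h1
      rw [eσ] at hM1
      have hM2 := hup (m + 1) (by omega)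
      push_cast at hM2
      set M := (Finset.range (t + 1)).sup' Finset.nonempty_range_add_one
          (fun ℓ => (∑ i ∈ Finset.Icc ℓ t, σ i) / ((d : ℚ) - (ℓ : ℚ))) with hMdef
      have b1 : ((m : ℚ) + 1 - k) * A + S ≤ M * ((d : ℚ) - k) := (div_le_iff₀ hdk).mp hM1
      have b2 : S ≤ M * ((d : ℚ) - m - 1) := by
        have : (0 : ℚ) < (d : ℚ) - ((m : ℚ) + 1) := by linarith
        have := (div_le_iff₀ this).mp hM2
        linarith [this]
      rw [e, div_le_iff₀ hdl]
      have hα : (0 : ℚ) ≤ (m : ℚ) + 1 - ℓ := by linarith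
      have hβ : (0 : ℚ) ≤ (ℓ : ℚ) - k := by linarith
      have hc : (0 : ℚ) < (m : ℚ) + 1 - k := by linarith
      have p1 := mul_le_mul_of_nonneg_left b1 hα
      have p2 := mul_le_mul_of_nonneg_left b2 hβ
      have key : ((m : ℚ) + 1 - k) * (((m : ℚ) + 1 - ℓ) * A + S)
          ≤ ((m : ℚ) + 1 - k) * (M * ((d : ℚ) - ℓ)) := by linarith [p1, p2]
      exact le_of_mul_le_mul_left key hc
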